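/- Fix an integer m > 1. Let {z_n} be generated by the selective sampling process S(κ,Φ) where Φ(x,S) = inf{d(x,s) : s ∈ S} is the distance-to-sample-set heuristic and κ satisfies Σ_{n=1}^∞ ρ^{κ(n)} = ∞ for every 0 < ρ ≤ 1. If x ∈ supp(μ) is not an f-boundary point, then the m nearest neighbors predictions satisfy ζ_n(x) → f(x) with probability one. -/

import Mathlib

open MeasureTheory ProbabilityTheory Filter Metric

/-- The support of a measure on a metric space: points all of whose open balls
have positive measure. -/
def measSupport {X : Type*} [MetricSpace X] [MeasurableSpace X]
    (μ : Measure X) : Set X :=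
  {x | ∀ ε > 0, 0 < μ (ball x ε)}

/-- `b` is an `f`-boundary point iff every ball about `b` meets the set of points
with a different `f`-value in positive measure. -/
def IsFBoundaryPoint {X Y : Type*} [MetricSpace X] [MeasurableSpace X]
    (f : X → Y) (μ : Measure X) (b : X) : Prop :=
  ∀ ε > 0, 0 < μ (ball b ε ∩ {x | f x ≠ f b})

/-- The sample set `Z_n(ω) = {z_1(ω), …, z_n(ω)}`. -/
def sampleSet {X Ω : Type*} (z : ℕ → Ω → X) (n : ℕ) (ω : Ω) : Set X :=
  {p | ∃ k, 1 ≤ k ∧ k ≤ n ∧ z k ω = p}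

/-- `modefreq_f(A)`: the frequency of the mode of `A` under `f`, i.e. the
maximum over `y` of the number of elements of `A` with `f`-value `y`. -/
noncomputable def modeFreq {X Y : Type*} (f : X → Y) (A : Set X) : ℕ :=
  ⨆ y : Y, (A ∩ f ⁻¹' {y}).ncard

/-- `V` is a set of `K` nearest neighbors of `x` in `S`: a `K`-element subset of
`S` minimizing distance to `x`, and among all such, minimizing `modefreq_f`. -/
def IsKNNSet {X Y : Type*} [MetricSpace X] (f : X → Y) (K : ℕ)
    (S : Set X) (x : X) (V : Finset X) : Prop :=
  V.card = K ∧ ↑V ⊆ S ∧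
    (∀ v ∈ V, ∀ s ∈ S, s ∉ V → dist x v ≤ dist x s) ∧
    ∀ W : Finset X, W.card = K → ↑W ⊆ S →
      (∀ v ∈ W, ∀ s ∈ S, s ∉ W → dist x v ≤ dist x s) →
      modeFreq f (↑V : Set X) ≤ modeFreq f (↑W : Set X)

open scoped Classical in
/-- The non-modal count heuristic with `K`-nearest neighbors:
`Φ(x,S) = |V_S(x)| − modefreq_f(V_S(x))`, where `V_S(x)` is a `K`-set of
nearest neighbors of `x` minimizing `modefreq_f` (so the value is
`K - min modefreq`), and `V_S(x) = ∅` when `x ∈ S`. -/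
noncomputable def nmcKNN {X Y : Type*} [MetricSpace X] (f : X → Y) (K : ℕ)
    (x : X) (S : Set X) : ℤ :=
  if x ∈ S then 0
  else (K : ℤ) - sInf {m : ℕ | ∃ V : Finset X, IsKNNSet f K S x V ∧
    modeFreq f (↑V : Set X) = m}

/-- `R` is `f`-contiguous: `R` is connected, `f` is constant on `R`, `R` lies in
the support of `μ`, and `R` contains no `f`-boundary point. -/
def IsFContiguous {X Y : Type*} [MetricSpace X] [MeasurableSpace X]
    (f : X → Y) (μ : Measure X) (R : Set X) : Prop :=
  IsPreconnected R ∧ (∀ a ∈ R, ∀ b ∈ R, f a = f b) ∧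
    R ⊆ measSupport μ ∧ ∀ b ∈ R, ¬ IsFBoundaryPoint f μ b

/-- An `f`-contiguous component: a maximal `f`-contiguous set. -/
def IsFContiguousComponent {X Y : Type*} [MetricSpace X] [MeasurableSpace X]
    (f : X → Y) (μ : Measure X) (C : Set X) : Prop :=
  IsFContiguous f μ C ∧ ∀ R : Set X, IsFContiguous f μ R → C ⊆ R → R = C

/-!
Since `∑ ρ ^ κ n = ∞` for every `ρ ∈ (0, 1]`, the second Borel–Cantelli lemma shows that almost
surely, for every ball `B` around `x` (which has positive measure because `x ∈ supp μ`), at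
infinitely many steps *all* candidates fall in `B`; whichever candidate the heuristic selects then
lies in `B`, so the samples accumulate at `x`. As `x` is not an `f`-boundary point, some ball
`ball x ε` meets `{f ≠ f x}` in a null set, which almost surely no candidate ever hits. Once `m`
samples lie in `ball x ε`, every `m`-set of nearest samples lies there too, is labelled
unanimously `f x`, and so its only mode is `f x`.
-/

open scoped ENNReal NNReal

lemma ENNReal.tsum_pow_eq_top {κ : ℕ → ℕ}
    (hκ : ∀ ρ : ℝ, 0 < ρ → ρ ≤ 1 →
      Tendsto (fun N => ∑ n ∈ Finset.Icc 1 N, ρ ^ κ n) atTop atTop)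
    {p : ℝ≥0∞} (hp0 : p ≠ 0) (hp1 : p ≤ 1) :
    ∑' n, p ^ κ (n + 1) = ∞ := by
  lift p to ℝ≥0 using ne_top_of_le_ne_top one_ne_top hp1
  have hdiv : Tendsto (fun N => ∑ n ∈ Finset.range N, p ^ κ (n + 1)) atTop atTop := by
    have hp : (0 : ℝ) < p := by exact_mod_cast pos_iff_ne_zero.2 (by exact_mod_cast hp0)
    rw [← NNReal.tendsto_coe_atTop]
    convert hκ p hp (by exact_mod_cast hp1) using 2 with N
    push_cast
    rw [Finset.range_eq_Ico, Finset.sum_Ico_add' (fun n => (p : ℝ) ^ κ n) 0 N 1]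
    rfl
  by_contra h
  simp_rw [← ENNReal.coe_pow] at h
  exact NNReal.not_summable_iff_tendsto_nat_atTop.2 hdiv
    (ENNReal.tsum_coe_ne_top_iff_summable.1 h)

section BorelCantelli

variable {X Ω : Type*} [MeasurableSpace X] [MeasurableSpace Ω] {μ : Measure X} {P : Measure Ω}
  {B : Set X}

lemma measure_biInter_setOf_forall_mem {β : Type*} {ι : β → Type*} [∀ n, Fintype (ι n)]
    {cand : (n : β) → ι n → Ω → X} (hmeas : ∀ n i, Measurable (cand n i))
    (hlaw : ∀ n i, P.map (cand n i) = μ)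
    (hindep : iIndepFun (m := fun _ : Σ n, ι n => (inferInstance : MeasurableSpace X))
      (fun p => cand p.1 p.2) P)
    (hB : MeasurableSet B) (T : Finset β) :
    P (⋂ n ∈ T, {ω | ∀ i, cand n i ω ∈ B}) = ∏ n ∈ T, μ B ^ Fintype.card (ι n) := by
  have hprod := hindep.meas_biInter (S := T.sigma fun _ => Finset.univ)
    (s := fun p => cand p.1 p.2 ⁻¹' B) (fun p _ => ⟨B, hB, rfl⟩)
  have hset : ⋂ p ∈ T.sigma (fun _ => Finset.univ), cand p.1 p.2 ⁻¹' B =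
      ⋂ n ∈ T, {ω | ∀ i, cand n i ω ∈ B} := by
    ext ω
    simpa using ⟨fun h n hn i => h ⟨n, i⟩ hn, fun h p hp => h p.1 hp p.2⟩
  rw [← hset, hprod, Finset.prod_sigma]
  refine Finset.prod_congr rfl fun n _ => ?_
  simp [← Measure.map_apply (hmeas _ _) hB, hlaw]

lemma measure_setOf_forall_mem {β : Type*} {ι : β → Type*} [∀ n, Fintype (ι n)]
    {cand : (n : β) → ι n → Ω → X} (hmeas : ∀ n i, Measurable (cand n i))
    (hlaw : ∀ n i, P.map (cand n i) = μ)
    (hindep : iIndepFun (m := fun _ : Σ n, ι n => (inferInstance : MeasurableSpace X))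
      (fun p => cand p.1 p.2) P)
    (hB : MeasurableSet B) (n : β) :
    P {ω | ∀ i, cand n i ω ∈ B} = μ B ^ Fintype.card (ι n) := by
  simpa using measure_biInter_setOf_forall_mem hmeas hlaw hindep hB {n}

lemma iIndepSet_setOf_forall_mem {β : Type*} {ι : β → Type*} [∀ n, Fintype (ι n)]
    {cand : (n : β) → ι n → Ω → X} (hmeas : ∀ n i, Measurable (cand n i))
    (hlaw : ∀ n i, P.map (cand n i) = μ)
    (hindep : iIndepFun (m := fun _ : Σ n, ι n => (inferInstance : MeasurableSpace X))
      (fun p => cand p.1 p.2) P)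
    (hB : MeasurableSet B) :
    iIndepSet (fun n => {ω | ∀ i, cand n i ω ∈ B}) P := by
  rw [iIndepSet_iff_meas_biInter fun n => by measurability]
  intro T
  simp only [measure_biInter_setOf_forall_mem hmeas hlaw hindep hB,
    measure_setOf_forall_mem hmeas hlaw hindep hB]

theorem ae_frequently_forall_mem {ι : ℕ → Type*} [∀ n, Fintype (ι n)]
    {cand : (n : ℕ) → ι n → Ω → X} (hmeas : ∀ n i, Measurable (cand n i))
    (hlaw : ∀ n i, P.map (cand n i) = μ)
    (hindep : iIndepFun (m := fun _ : Σ n, ι n => (inferInstance : MeasurableSpace X))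
      (fun p => cand p.1 p.2) P)
    (hB : MeasurableSet B) (hdiv : ∑' n, μ B ^ Fintype.card (ι n) = ∞) :
    ∀ᵐ ω ∂P, ∃ᶠ n in atTop, ∀ i, cand n i ω ∈ B := by
  have := hindep.isProbabilityMeasure
  have hE (n : ℕ) : MeasurableSet {ω | ∀ i, cand n i ω ∈ B} := by measurability
  have hlimsup := measure_limsup_eq_one hE (iIndepSet_setOf_forall_mem hmeas hlaw hindep hB)
    (by simp only [measure_setOf_forall_mem hmeas hlaw hindep hB, hdiv])
  filter_upwards [(mem_ae_iff_prob_eq_one (MeasurableSet.measurableSet_limsup hE)).2 hlimsup]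
    with ω hω
  exact mem_limsup_iff_frequently_mem.1 hω

end BorelCantelli

section Sampling

variable {X Ω : Type*} {ι : ℕ → Type*} {cand : (n : ℕ) → ι n → Ω → X} {z : ℕ → Ω → X} {ω : Ω}

lemma sampleSet_mono (z : ℕ → Ω → X) (ω : Ω) : Monotone (sampleSet z · ω) :=
  fun _ _ hn _ ⟨k, hk1, hkn, hk⟩ => ⟨k, hk1, hkn.trans hn, hk⟩

lemma exists_cand_eq_of_mem_iUnion_sampleSet (hz : ∀ n, ∃ i, z (n + 1) ω = cand n i ω) {p : X}
    (hp : p ∈ ⋃ n, sampleSet z n ω) : ∃ n i, cand n i ω = p := by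
  obtain ⟨_, ⟨n, rfl⟩, k, hk1, -, rfl⟩ := hp
  obtain ⟨j, rfl⟩ : ∃ j, k = j + 1 := ⟨k - 1, by omega⟩
  obtain ⟨i, hi⟩ := hz j
  exact ⟨j, i, hi.symm⟩

lemma mem_closure_iUnion_sampleSet [MetricSpace X] (hz : ∀ n, ∃ i, z (n + 1) ω = cand n i ω)
    {x : X} (hnear : ∀ k : ℕ, ∃ n, ∀ i, cand n i ω ∈ ball x (1 / (k + 1))) :
    x ∈ closure (⋃ n, sampleSet z n ω) := by
  rw [Metric.mem_closure_iff]
  intro δ hδ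
  obtain ⟨k, hk⟩ := exists_nat_one_div_lt hδ
  obtain ⟨n, hn⟩ := hnear k
  obtain ⟨i, hi⟩ := hz n
  refine ⟨z (n + 1) ω, Set.mem_iUnion_of_mem (n + 1) ⟨n + 1, le_add_self, le_rfl, rfl⟩, ?_⟩
  exact hi ▸ (mem_ball'.1 (hn i)).trans hk

end Sampling

lemma Set.infinite_of_mem_closure_of_notMem {X : Type*} [TopologicalSpace X] [T1Space X]
    {s : Set X} {x : X} (hx : x ∈ closure s) (hxs : x ∉ s) : s.Infinite :=
  fun hfin => hxs (hfin.isClosed.closure_eq ▸ hx)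

section ModeFreq

variable {X Y : Type*} {f : X → Y}

lemma ncard_inter_preimage_le_modeFreq {A : Set X} (hA : A.Finite) (y : Y) :
    (A ∩ f ⁻¹' {y}).ncard ≤ modeFreq f A :=
  le_ciSup (f := fun y => (A ∩ f ⁻¹' {y}).ncard)
    ⟨A.ncard, by rintro _ ⟨y', rfl⟩; exact Set.ncard_le_ncard Set.inter_subset_left hA⟩ y

lemma eq_of_ncard_inter_preimage_eq_modeFreq {U : Finset X} {y y' : Y} (hU : U.Nonempty)
    (hf : ∀ u ∈ U, f u = y) (hy' : ((U : Set X) ∩ f ⁻¹' {y'}).ncard = modeFreq f U) :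
    y' = y := by
  have hUy : (U : Set X) ∩ f ⁻¹' {y} = U := Set.inter_eq_self_of_subset_left hf
  have hcard : (U : Set X).ncard ≤ ((U : Set X) ∩ f ⁻¹' {y'}).ncard := by
    rw [hy', ← congrArg Set.ncard hUy]
    exact ncard_inter_preimage_le_modeFreq U.finite_toSet y
  have hUy' : (U : Set X) ∩ f ⁻¹' {y'} = U :=
    Set.eq_of_subset_of_ncard_le Set.inter_subset_left hcard U.finite_toSet
  obtain ⟨u, hu⟩ := hU
  have hfu : f u = y' := (hUy'.symm ▸ Finset.mem_coe.2 hu : u ∈ (U : Set X) ∩ f ⁻¹' {y'}).2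
  rw [← hfu, hf u hu]

end ModeFreq

section NearestNeighbors

variable {X Y : Type*} [MetricSpace X] {f : X → Y}

lemma Finset.coe_subset_ball_of_nearest {S : Set X} {U T : Finset X} {x : X} {ε : ℝ}
    (hT : ↑T ⊆ S ∩ ball x ε) (hcard : U.card ≤ T.card)
    (hU : ∀ u ∈ U, ∀ s ∈ S, s ∉ U → dist x u ≤ dist x s) : ↑U ⊆ ball x ε := by
  classical
  intro u hu
  by_contra hux
  have huT : u ∉ T := fun h => hux (hT h).2
  obtain ⟨t, htT, htU⟩ : ∃ t ∈ T, t ∉ U := by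
    by_contra! hTU
    have := Finset.card_le_card (Finset.insert_subset hu hTU)
    rw [Finset.card_insert_of_notMem huT] at this
    omega
  have hut := hU u hu t (hT htT).1 htU
  exact hux (mem_ball'.2 (hut.trans_lt (mem_ball'.1 (hT htT).2)))

theorem eventually_eq_of_mem_closure_iUnion {m : ℕ} (hm : 0 < m) {S : ℕ → Set X}
    (hS : Monotone S) {ζ : ℕ → Y} {x : X} {ε : ℝ} (hε : 0 < ε)
    (hx : x ∈ closure (⋃ n, S n)) (hf : ∀ p ∈ ⋃ n, S n, p ∈ ball x ε → f p = f x)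
    (hζ_mem : ∀ n, m ≤ n → x ∈ S n → ζ n = f x)
    (hζ : ∀ n, m ≤ n → x ∉ S n → ∃ U : Finset X,
      U.card = m ∧ ↑U ⊆ S n ∧ (∀ u ∈ U, ∀ s ∈ S n, s ∉ U → dist x u ≤ dist x s) ∧
      ((↑U : Set X) ∩ f ⁻¹' {ζ n}).ncard = modeFreq f (↑U : Set X)) :
    ∀ᶠ n in atTop, ζ n = f x := by
  by_cases hxS : ∃ N, x ∈ S N
  · obtain ⟨N, hN⟩ := hxS
    filter_upwards [eventually_ge_atTop (max N m)] with n hn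
    exact hζ_mem n (le_of_max_le_right hn) (hS (le_of_max_le_left hn) hN)
  push Not at hxS
  have hinf : (ball x ε ∩ ⋃ n, S n).Infinite :=
    Set.infinite_of_mem_closure_of_notMem (isOpen_ball.inter_closure ⟨mem_ball_self hε, hx⟩)
      fun h => (Set.mem_iUnion.1 h.2).elim hxS
  obtain ⟨T, hT, hTcard⟩ := hinf.exists_subset_card_eq m
  obtain ⟨N, hN⟩ :=
    hS.directed_le.exists_mem_subset_of_finset_subset_biUnion (hT.trans Set.inter_subset_right)
  filter_upwards [eventually_ge_atTop (max N m)] with n hn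
  obtain ⟨U, hUcard, hUS, hUnear, hvote⟩ := hζ n (le_of_max_le_right hn) (hxS n)
  have hTn : ↑T ⊆ S n ∩ ball x ε := fun t ht => ⟨hS (le_of_max_le_left hn) (hN ht), (hT ht).1⟩
  have hUball := Finset.coe_subset_ball_of_nearest hTn (hUcard.trans hTcard.symm).le hUnear
  exact eq_of_ncard_inter_preimage_eq_modeFreq (Finset.card_pos.1 (hUcard ▸ hm))
    (fun u hu => hf u (Set.mem_iUnion_of_mem n (hUS hu)) (hUball hu)) hvote

end NearestNeighbors

theorem dist_heuristic_mNN_pointwise_convergence_general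
    {X : Type*} [MetricSpace X] [MeasurableSpace X] [BorelSpace X]
    {Y : Type*}
    (μ : Measure X) [IsProbabilityMeasure μ] (f : X → Y)
    {Ω : Type*} [MeasurableSpace Ω] (P : Measure Ω)
    (m : ℕ) (hm : 1 < m)
    -- the candidate-count function κ : ℕ⁺ → ℕ⁺ (κ (n+1) candidates at step n+1)
    (κ : ℕ → ℕ)
    (hκ : ∀ ρ : ℝ, 0 < ρ → ρ ≤ 1 →
      Tendsto (fun N => ∑ n ∈ Finset.Icc 1 N, ρ ^ κ n) atTop atTop)
    -- at step n+1, κ(n+1) candidates are drawn, iid with law μ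
    (cand : (n : ℕ) → Fin (κ (n + 1)) → Ω → X)
    (hmeas : ∀ n i, Measurable (cand n i))
    (hlaw : ∀ n i, P.map (cand n i) = μ)
    (hindep : iIndepFun
      (m := fun _ : Σ n : ℕ, Fin (κ (n + 1)) => (inferInstance : MeasurableSpace X))
      (fun p => cand p.1 p.2) P)
    -- the sample z_{n+1} is a candidate maximizing the heuristic Φ(·, Z_n)
    (z : ℕ → Ω → X)
    (hsel : ∀ ω n, ∃ i : Fin (κ (n + 1)), z (n + 1) ω = cand n i ω ∧
      ∀ j : Fin (κ (n + 1)),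
        infDist (cand n j ω) (sampleSet z n ω) ≤
          infDist (cand n i ω) (sampleSet z n ω))
    -- ζ_n is an m nearest neighbors prediction over Z_n: on the most ambiguous
    -- m-set of nearest samples, predict a modal f-value (ties broken arbitrarily)
    (ζ : ℕ → Ω → X → Y)
    (hζ_mem : ∀ ω x n, m ≤ n → x ∈ sampleSet z n ω → ζ n ω x = f x)
    (hζ : ∀ ω x n, m ≤ n → x ∉ sampleSet z n ω → ∃ U : Finset X,
      U.card = m ∧ ↑U ⊆ sampleSet z n ω ∧
      (∀ u ∈ U, ∀ s ∈ sampleSet z n ω, s ∉ U → dist x u ≤ dist x s) ∧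
      (∀ W : Finset X, W.card = m → ↑W ⊆ sampleSet z n ω →
        (∀ u ∈ W, ∀ s ∈ sampleSet z n ω, s ∉ W → dist x u ≤ dist x s) →
        modeFreq f (↑U : Set X) ≤ modeFreq f (↑W : Set X)) ∧
      ((↑U : Set X) ∩ f ⁻¹' {ζ n ω x}).ncard = modeFreq f (↑U : Set X))
    (x : X) (hx : x ∈ measSupport μ) (hxb : ¬ IsFBoundaryPoint f μ x) :
    ∀ᵐ ω ∂P, ∀ᶠ n in atTop, ζ n ω x = f x := by
  obtain ⟨ε, hε, hμε⟩ : ∃ ε > 0, μ (ball x ε ∩ {p | f p ≠ f x}) = 0 := by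
    simpa [IsFBoundaryPoint] using hxb
  have hlabel : ∀ᵐ ω ∂P, ∀ n i, cand n i ω ∈ ball x ε → f (cand n i ω) = f x := by
    refine ae_all_iff.2 fun n => ae_all_iff.2 fun i =>
      ae_of_ae_map (p := fun p => p ∈ ball x ε → f p = f x) (hmeas n i).aemeasurable ?_
    rw [hlaw]
    filter_upwards [measure_eq_zero_iff_ae_notMem.1 hμε] with p hp hpε
    by_contra hne
    exact hp ⟨hpε, hne⟩
  have hnear :
      ∀ᵐ ω ∂P, ∀ k : ℕ, ∃ᶠ n in atTop, ∀ i, cand n i ω ∈ ball x (1 / (k + 1)) :=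
    ae_all_iff.2 fun k => ae_frequently_forall_mem hmeas hlaw hindep measurableSet_ball
      (by simpa using ENNReal.tsum_pow_eq_top hκ (hx _ Nat.one_div_pos_of_nat).ne' prob_le_one)
  filter_upwards [hlabel, hnear] with ω hlabel hnear
  have hz (n : ℕ) : ∃ i, z (n + 1) ω = cand n i ω := (hsel ω n).imp fun _ => And.left
  refine eventually_eq_of_mem_closure_iUnion (zero_lt_one.trans hm) (sampleSet_mono z ω) hε
    (mem_closure_iUnion_sampleSet hz fun k => (hnear k).exists) (fun p hp hpε => ?_)
    (hζ_mem ω x) fun n hn hxn => ?_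
  · obtain ⟨n, i, rfl⟩ := exists_cand_eq_of_mem_iUnion_sampleSet hz hp
    exact hlabel n i hpε
  · obtain ⟨U, hUcard, hUS, hUnear, -, hvote⟩ := hζ ω x n hn hxn
    exact ⟨U, hUcard, hUS, hUnear, hvote⟩

/-- **The distance-to-sample-set heuristic under the `m` nearest neighbors
rule.** Fix `m > 1`. If the samples are generated by the selective sampling
process `S(κ, Φ)` with `Φ(x,S) = d(x,S)` and `∑ ρ^{κ(n)} = ∞` for all
`0 < ρ ≤ 1`, then at every point `x` of the support of `μ` that is not an
`f`-boundary point, the `m` nearest neighbors predictions `ζ_n(x)` converge to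
`f(x)` with probability one. -/
theorem dist_heuristic_mNN_pointwise_convergence
    {X : Type*} [MetricSpace X] [MeasurableSpace X] [BorelSpace X]
    {Y : Type*} [Countable Y]
    (μ : Measure X) [IsProbabilityMeasure μ] (f : X → Y)
    {Ω : Type*} [MeasurableSpace Ω] (P : Measure Ω) [IsProbabilityMeasure P]
    (m : ℕ) (hm : 1 < m)
    -- the candidate-count function κ : ℕ⁺ → ℕ⁺ (κ (n+1) candidates at step n+1)
    (κ : ℕ → ℕ) (hκpos : ∀ n, 1 ≤ κ n)
    (hκ : ∀ ρ : ℝ, 0 < ρ → ρ ≤ 1 →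
      Tendsto (fun N => ∑ n ∈ Finset.Icc 1 N, ρ ^ κ n) atTop atTop)
    -- at step n+1, κ(n+1) candidates are drawn, iid with law μ
    (cand : (n : ℕ) → Fin (κ (n + 1)) → Ω → X)
    (hmeas : ∀ n i, Measurable (cand n i))
    (hlaw : ∀ n i, P.map (cand n i) = μ)
    (hindep : iIndepFun
      (m := fun _ : Σ n : ℕ, Fin (κ (n + 1)) => (inferInstance : MeasurableSpace X))
      (fun p => cand p.1 p.2) P)
    -- the sample z_{n+1} is a candidate maximizing the heuristic Φ(·, Z_n)
    (z : ℕ → Ω → X)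
    (hsel : ∀ ω n, ∃ i : Fin (κ (n + 1)), z (n + 1) ω = cand n i ω ∧
      ∀ j : Fin (κ (n + 1)),
        infDist (cand n j ω) (sampleSet z n ω) ≤
          infDist (cand n i ω) (sampleSet z n ω))
    -- ζ_n is an m nearest neighbors prediction over Z_n: on the most ambiguous
    -- m-set of nearest samples, predict a modal f-value (ties broken arbitrarily)
    (ζ : ℕ → Ω → X → Y)
    (hζ_mem : ∀ ω x n, m ≤ n → x ∈ sampleSet z n ω → ζ n ω x = f x)
    (hζ : ∀ ω x n, m ≤ n → x ∉ sampleSet z n ω → ∃ U : Finset X,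
      U.card = m ∧ ↑U ⊆ sampleSet z n ω ∧
      (∀ u ∈ U, ∀ s ∈ sampleSet z n ω, s ∉ U → dist x u ≤ dist x s) ∧
      (∀ W : Finset X, W.card = m → ↑W ⊆ sampleSet z n ω →
        (∀ u ∈ W, ∀ s ∈ sampleSet z n ω, s ∉ W → dist x u ≤ dist x s) →
        modeFreq f (↑U : Set X) ≤ modeFreq f (↑W : Set X)) ∧
      ((↑U : Set X) ∩ f ⁻¹' {ζ n ω x}).ncard = modeFreq f (↑U : Set X))
    (x : X) (hx : x ∈ measSupport μ) (hxb : ¬ IsFBoundaryPoint f μ x) :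
    ∀ᵐ ω ∂P, ∀ᶠ n in atTop, ζ n ω x = f x :=
  dist_heuristic_mNN_pointwise_convergence_general μ f P m hm κ hκ cand hmeas hlaw hindep z hsel ζ
    hζ_mem hζ x hx hxb
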